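/- arXiv:2507.02974 — 4 statements merged into one kernel-verified Lean document; each statement's English description precedes it below -/
import Mathlib

section
/- The exponential mechanism on a finite set with score vector s ∈ ℝ^d, sampling index i with probability proportional to exp(s_i/τ), satisfies: if two score vectors s, s' satisfy ‖s - s'‖_∞ ≤ Δ, then for all α > 1 the α-Rényi divergence between the resulting distributions is at most α·Δ²/(2τ²), i.e., the mechanism satisfies ρ-zCDP with ρ = Δ²/(2τ²). -/
open Finset

/-- Softmax / exponential mechanism distribution at temperature `τ`. -/
noncomputable def softmaxProb {d : ℕ} (τ : ℝ) (s : Fin d → ℝ) (i : Fin d) : ℝ :=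
  Real.exp (s i / τ) / ∑ j, Real.exp (s j / τ)

namespace ExpMechAux

variable {d : ℕ}

/-- Partition function along the line `b + x • δ`. -/
noncomputable def Sf (b δ : Fin d → ℝ) (x : ℝ) : ℝ := ∑ k, Real.exp (b k + x * δ k)

noncomputable def Tf (b δ : Fin d → ℝ) (x : ℝ) : ℝ := ∑ k, δ k * Real.exp (b k + x * δ k)

noncomputable def Uf (b δ : Fin d → ℝ) (x : ℝ) : ℝ := ∑ k, δ k ^ 2 * Real.exp (b k + x * δ k)

lemma hasDerivAt_line (b δ : Fin d → ℝ) (k : Fin d) (x : ℝ) :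
    HasDerivAt (fun x : ℝ => b k + x * δ k) (δ k) x := by
  simpa using ((hasDerivAt_id x).mul_const (δ k)).const_add (b k)

lemma hasDerivAt_Sf (b δ : Fin d → ℝ) (x : ℝ) : HasDerivAt (Sf b δ) (Tf b δ x) x := by
  unfold Sf Tf
  apply HasDerivAt.fun_sum
  intro k _
  have := (hasDerivAt_line b δ k x).exp
  exact this.congr_deriv (by ring)

lemma hasDerivAt_Tf (b δ : Fin d → ℝ) (x : ℝ) : HasDerivAt (Tf b δ) (Uf b δ x) x := by
  unfold Tf Uf
  apply HasDerivAt.fun_sum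
  intro k _
  have := (hasDerivAt_line b δ k x).exp.const_mul (δ k)
  exact this.congr_deriv (by ring)

lemma Sf_pos (b δ : Fin d → ℝ) (hd : 0 < d) (x : ℝ) : 0 < Sf b δ x := by
  have : Nonempty (Fin d) := ⟨⟨0, hd⟩⟩
  exact Finset.sum_pos (fun k _ => Real.exp_pos _) Finset.univ_nonempty

/-- Key inequality: quadratic (in `α`) bound on the Rényi log-ratio of partition
functions, proved via convexity of a shifted log-partition function. -/
lemma key (b δ : Fin d → ℝ) (hd : 0 < d) (c : ℝ) (hδ : ∀ k, |δ k| ≤ c)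
    (α : ℝ) (hα : 1 < α) :
    Real.log (Sf b δ α) + (α - 1) * Real.log (Sf b δ 0) - α * Real.log (Sf b δ 1)
      ≤ α * (α - 1) * c ^ 2 / 2 := by
  set S := Sf b δ with hS
  set T := Tf b δ with hT
  set U := Uf b δ with hU
  have hSpos : ∀ x, 0 < S x := Sf_pos b δ hd
  have hSne : ∀ x : ℝ, S x ≠ 0 := fun x => (hSpos x).ne'
  set g : ℝ → ℝ := fun x => Real.log (S x) with hg
  set φ : ℝ → ℝ := fun x => c ^ 2 / 2 * (x ^ 2 - x) + x * g 1 - (x - 1) * g 0 - g x with hφdef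
  have hgd : ∀ x, HasDerivAt g (T x / S x) x := fun x =>
    (hasDerivAt_Sf b δ x).log (hSne x)
  set φ' : ℝ → ℝ := fun x => c ^ 2 / 2 * (2 * x - 1) + g 1 - g 0 - T x / S x with hφ'def
  have hφd : ∀ x, HasDerivAt φ (φ' x) x := by
    intro x
    have h1 : HasDerivAt (fun x : ℝ => c ^ 2 / 2 * (x ^ 2 - x))
        (c ^ 2 / 2 * (2 * x - 1)) x := by
      have := ((hasDerivAt_pow 2 x).sub (hasDerivAt_id x)).const_mul (c ^ 2 / 2)
      exact this.congr_deriv (by norm_num)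
    have h2 : HasDerivAt (fun x : ℝ => x * g 1) (g 1) x := by
      simpa using (hasDerivAt_id x).mul_const (g 1)
    have h3 : HasDerivAt (fun x : ℝ => (x - 1) * g 0) (g 0) x := by
      simpa using ((hasDerivAt_id x).sub_const 1).mul_const (g 0)
    exact ((h1.add h2).sub h3).sub (hgd x)
  have hderivφ : deriv φ = φ' := funext fun x => (hφd x).deriv
  set φ'' : ℝ → ℝ := fun x => c ^ 2 - (U x * S x - T x * T x) / S x ^ 2 with hφ''def
  have hφ'd : ∀ x, HasDerivAt φ' (φ'' x) x := by
    intro x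
    have h1 : HasDerivAt (fun x : ℝ => c ^ 2 / 2 * (2 * x - 1) + g 1 - g 0) (c ^ 2) x := by
      have := ((((hasDerivAt_id x).const_mul 2).sub_const 1).const_mul
        (c ^ 2 / 2)).add_const (g 1)
      have h := this.sub_const (g 0)
      exact h.congr_deriv (by ring)
    have h2 : HasDerivAt (fun x => T x / S x) ((U x * S x - T x * T x) / S x ^ 2) x :=
      (hasDerivAt_Tf b δ x).div (hasDerivAt_Sf b δ x) (hSne x)
    exact h1.sub h2
  have hderivφ' : deriv φ' = φ'' := funext fun x => (hφ'd x).deriv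
  have hφ''nonneg : ∀ x, 0 ≤ φ'' x := by
    intro x
    have hUle : U x ≤ c ^ 2 * S x := by
      rw [hU, hS]
      unfold Uf Sf
      rw [Finset.mul_sum]
      apply Finset.sum_le_sum
      intro k _
      have h1 : δ k ^ 2 ≤ c ^ 2 := sq_le_sq' (abs_le.mp (hδ k)).1 (abs_le.mp (hδ k)).2
      exact mul_le_mul_of_nonneg_right h1 (Real.exp_pos _).le
    have hS2 : (0:ℝ) < S x ^ 2 := pow_pos (hSpos x) 2
    rw [hφ''def, sub_nonneg, div_le_iff₀ hS2]
    nlinarith [sq_nonneg (T x), hSpos x]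
  have hconv : ConvexOn ℝ Set.univ φ := by
    apply convexOn_univ_of_deriv2_nonneg
    · exact fun x => (hφd x).differentiableAt
    · rw [hderivφ]; exact fun x => (hφ'd x).differentiableAt
    · intro x
      have : deriv^[2] φ x = deriv (deriv φ) x := by
        simp [Function.iterate_succ, Function.comp]
      rw [this, hderivφ, hderivφ']
      exact hφ''nonneg x
  have hαpos : (0:ℝ) < α := lt_trans one_pos hα
  have ha : (0:ℝ) ≤ (α - 1) / α := div_nonneg (by linarith) hαpos.le
  have hb : (0:ℝ) ≤ 1 / α := by positivity
  have hab : (α - 1) / α + 1 / α = 1 := by field_simp; ring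
  have hcomb := hconv.2 (Set.mem_univ (0:ℝ)) (Set.mem_univ α) ha hb hab
  have hpt : ((α - 1) / α) • (0:ℝ) + (1 / α) • α = 1 := by
    rw [smul_eq_mul, smul_eq_mul, mul_zero, zero_add, one_div, inv_mul_cancel₀ hαpos.ne']
  rw [hpt] at hcomb
  have hφ0 : φ 0 = 0 := by simp [hφdef]
  have hφ1 : φ 1 = 0 := by simp [hφdef]
  rw [hφ0, hφ1, smul_eq_mul, smul_eq_mul] at hcomb
  have hφα : 0 ≤ φ α := by
    have h1α : (0:ℝ) < 1 / α := by positivity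
    by_contra hneg
    push_neg at hneg
    have : 1 / α * φ α < 0 := mul_neg_of_pos_of_neg h1α hneg
    linarith
  rw [hφdef] at hφα
  simp only at hφα
  nlinarith [hφα]

end ExpMechAux

open ExpMechAux in
/-- The exponential mechanism with score sensitivity `Δ` (in ℓ∞) and temperature `τ`
satisfies `ρ`-zCDP with `ρ = Δ²/(2τ²)`: for all `α > 1`, the `α`-Rényi divergence
between the output distributions on `s` and `s'` is at most `α · Δ²/(2τ²)`. -/
theorem expMech_zCDP {d : ℕ} (τ Δ : ℝ) (hτ : 0 < τ) (hΔ : 0 ≤ Δ)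
    (s s' : Fin d → ℝ) (h : ∀ i, |s i - s' i| ≤ Δ) (α : ℝ) (hα : 1 < α) :
    (α - 1)⁻¹ *
        Real.log (∑ i, softmaxProb τ s' i * (softmaxProb τ s i / softmaxProb τ s' i) ^ α)
      ≤ α * Δ ^ 2 / (2 * τ ^ 2) := by
  rcases Nat.eq_zero_or_pos d with hd | hd
  · subst hd
    simp only [Finset.univ_eq_empty, Finset.sum_empty, Real.log_zero, mul_zero]
    positivity
  -- main case
  set B : Fin d → ℝ := fun i => s' i / τ with hB
  set D : Fin d → ℝ := fun i => (s i - s' i) / τ with hD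
  have hBD1 : ∀ k, B k + 1 * D k = s k / τ := by
    intro k
    rw [hB, hD]
    simp only [one_mul]
    rw [← add_div]
    ring_nf
  have hBD0 : ∀ k, B k + 0 * D k = s' k / τ := by intro k; simp [hB]
  have hS1 : Sf B D 1 = ∑ j, Real.exp (s j / τ) := by
    unfold Sf; exact Finset.sum_congr rfl fun k _ => by rw [hBD1]
  have hS0 : Sf B D 0 = ∑ j, Real.exp (s' j / τ) := by
    unfold Sf; exact Finset.sum_congr rfl fun k _ => by rw [hBD0]
  have hS0pos : 0 < Sf B D 0 := Sf_pos B D hd 0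
  have hS1pos : 0 < Sf B D 1 := Sf_pos B D hd 1
  have hSapos : 0 < Sf B D α := Sf_pos B D hd α
  have hterm : ∀ i : Fin d, softmaxProb τ s' i * (softmaxProb τ s i / softmaxProb τ s' i) ^ α
      = Real.exp (B i + α * D i) * (Sf B D 0 ^ (α - 1) / Sf B D 1 ^ α) := by
    intro i
    have e0 : softmaxProb τ s' i = Real.exp (B i) / Sf B D 0 := by
      rw [softmaxProb, hS0, hB]
    have e1 : softmaxProb τ s i = Real.exp (B i + D i) / Sf B D 1 := by
      rw [softmaxProb, hS1]
      congr 1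
      rw [← hBD1 i]
      ring_nf
    rw [e0, e1]
    have hr : Real.exp (B i + D i) / Sf B D 1 / (Real.exp (B i) / Sf B D 0)
        = Real.exp (D i) * (Sf B D 0 / Sf B D 1) := by
      rw [Real.exp_add]
      field_simp
    rw [hr, Real.mul_rpow (Real.exp_pos _).le (div_nonneg hS0pos.le hS1pos.le),
      Real.div_rpow hS0pos.le hS1pos.le, ← Real.exp_mul]
    have hsub : Sf B D 0 ^ (α - 1) = Sf B D 0 ^ α / Sf B D 0 := by
      rw [Real.rpow_sub hS0pos, Real.rpow_one]
    rw [hsub, Real.exp_add (B i) (α * D i)]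
    field_simp
  have hsum : (∑ i, softmaxProb τ s' i * (softmaxProb τ s i / softmaxProb τ s' i) ^ α)
      = Sf B D α * Sf B D 0 ^ (α - 1) / Sf B D 1 ^ α := by
    rw [Finset.sum_congr rfl fun i _ => hterm i, ← Finset.sum_mul]
    unfold Sf
    rw [mul_div_assoc]
  have hlog : Real.log (∑ i, softmaxProb τ s' i * (softmaxProb τ s i / softmaxProb τ s' i) ^ α)
      = Real.log (Sf B D α) + (α - 1) * Real.log (Sf B D 0) - α * Real.log (Sf B D 1) := by
    have p0 : (0:ℝ) < Sf B D 0 ^ (α - 1) := Real.rpow_pos_of_pos hS0pos _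
    have p1 : (0:ℝ) < Sf B D 1 ^ α := Real.rpow_pos_of_pos hS1pos _
    rw [hsum, Real.log_div (mul_pos hSapos p0).ne' p1.ne',
      Real.log_mul hSapos.ne' p0.ne',
      Real.log_rpow hS0pos, Real.log_rpow hS1pos]
  have hc : ∀ k, |D k| ≤ Δ / τ := by
    intro k
    rw [hD]
    rw [abs_div, abs_of_pos hτ]
    exact div_le_div_of_nonneg_right (h k) hτ.le |>.trans_eq rfl
  have hkey := key B D hd (Δ / τ) hc α hα
  rw [hlog]
  have hα1 : (0:ℝ) < α - 1 := by linarith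
  have := mul_le_mul_of_nonneg_left hkey (by positivity : (0:ℝ) ≤ (α - 1)⁻¹)
  refine this.trans_eq ?_
  field_simp
end

section
/- Adaptive sequential composition of zCDP: if A_1 satisfies ρ_1-zCDP and, for each possible output y of A_1, the mechanism A_2(·, y) satisfies ρ_2-zCDP, then the composed mechanism A(D) = (Y_1, A_2(D, Y_1)) with Y_1 = A_1(D) satisfies (ρ_1 + ρ_2)-zCDP. -/
open Finset in
/-- Adaptive sequential composition of zCDP (discrete mechanisms, Rényi divergence
written explicitly): if `A₁` is `ρ₁`-zCDP and `A₂(·, y)` is `ρ₂`-zCDP for each `y`,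
then the composed mechanism `D ↦ (Y₁, A₂(D, Y₁))` is `(ρ₁ + ρ₂)`-zCDP. -/
theorem zcdp_adaptive_composition {D Y₁ Y₂ : Type*} [Fintype Y₁] [Fintype Y₂]
    (Adj : D → D → Prop) (ρ₁ ρ₂ : ℝ)
    (A₁ : D → Y₁ → ℝ) (A₂ : D → Y₁ → Y₂ → ℝ)
    (hA₁pos : ∀ x y, 0 < A₁ x y) (hA₁sum : ∀ x, ∑ y, A₁ x y = 1)
    (hA₂pos : ∀ x y₁ y₂, 0 < A₂ x y₁ y₂) (hA₂sum : ∀ x y₁, ∑ y₂, A₂ x y₁ y₂ = 1)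
    (h₁ : ∀ x x', Adj x x' → ∀ α > (1 : ℝ),
      (α - 1)⁻¹ * Real.log (∑ y, A₁ x' y * (A₁ x y / A₁ x' y) ^ α) ≤ ρ₁ * α)
    (h₂ : ∀ y₁, ∀ x x', Adj x x' → ∀ α > (1 : ℝ),
      (α - 1)⁻¹ * Real.log (∑ y₂, A₂ x' y₁ y₂ * (A₂ x y₁ y₂ / A₂ x' y₁ y₂) ^ α)
        ≤ ρ₂ * α) :
    ∀ x x', Adj x x' → ∀ α > (1 : ℝ),
      (α - 1)⁻¹ * Real.log (∑ p : Y₁ × Y₂,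
          (A₁ x' p.1 * A₂ x' p.1 p.2) *
            ((A₁ x p.1 * A₂ x p.1 p.2) / (A₁ x' p.1 * A₂ x' p.1 p.2)) ^ α)
        ≤ (ρ₁ + ρ₂) * α := by
  intro x x' hadj α hα
  have hne₁ : Nonempty Y₁ := by
    rcases isEmpty_or_nonempty Y₁ with h | h
    · simpa using hA₁sum x
    · exact h
  have hne₂ : Nonempty Y₂ := by
    rcases isEmpty_or_nonempty Y₂ with h | h
    · obtain ⟨y₀⟩ := hne₁
      simpa using hA₂sum x y₀
    · exact h
  have hc : (0:ℝ) < α - 1 := by linarith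
  -- abbreviations
  set S₁ : ℝ := ∑ y, A₁ x' y * (A₁ x y / A₁ x' y) ^ α with hS₁def
  set S₂ : Y₁ → ℝ := fun y₁ => ∑ y₂, A₂ x' y₁ y₂ * (A₂ x y₁ y₂ / A₂ x' y₁ y₂) ^ α
    with hS₂def
  have hS₁pos : 0 < S₁ := by
    apply Finset.sum_pos
    · intro y _
      exact mul_pos (hA₁pos x' y)
        (Real.rpow_pos_of_pos (div_pos (hA₁pos x y) (hA₁pos x' y)) α)
    · exact Finset.univ_nonempty
  have hS₂pos : ∀ y₁, 0 < S₂ y₁ := by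
    intro y₁
    apply Finset.sum_pos
    · intro y₂ _
      exact mul_pos (hA₂pos x' y₁ y₂)
        (Real.rpow_pos_of_pos (div_pos (hA₂pos x y₁ y₂) (hA₂pos x' y₁ y₂)) α)
    · exact Finset.univ_nonempty
  have hS₁le : S₁ ≤ Real.exp ((α - 1) * (ρ₁ * α)) := by
    have hlog : Real.log S₁ ≤ (α - 1) * (ρ₁ * α) := by
      rw [hS₁def]
      exact (inv_mul_le_iff₀ hc).mp (h₁ x x' hadj α hα)
    calc S₁ = Real.exp (Real.log S₁) := (Real.exp_log hS₁pos).symm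
      _ ≤ _ := Real.exp_le_exp.mpr hlog
  have hS₂le : ∀ y₁, S₂ y₁ ≤ Real.exp ((α - 1) * (ρ₂ * α)) := by
    intro y₁
    have hlog : Real.log (S₂ y₁) ≤ (α - 1) * (ρ₂ * α) := by
      rw [hS₂def]
      exact (inv_mul_le_iff₀ hc).mp (h₂ y₁ x x' hadj α hα)
    calc S₂ y₁ = Real.exp (Real.log (S₂ y₁)) := (Real.exp_log (hS₂pos y₁)).symm
      _ ≤ _ := Real.exp_le_exp.mpr hlog
  -- the product sum factors
  have hfact : (∑ p : Y₁ × Y₂,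
      (A₁ x' p.1 * A₂ x' p.1 p.2) *
        ((A₁ x p.1 * A₂ x p.1 p.2) / (A₁ x' p.1 * A₂ x' p.1 p.2)) ^ α)
      = ∑ y₁, (A₁ x' y₁ * (A₁ x y₁ / A₁ x' y₁) ^ α) * S₂ y₁ := by
    rw [Fintype.sum_prod_type]
    refine Finset.sum_congr rfl fun y₁ _ => ?_
    rw [hS₂def, Finset.mul_sum]
    refine Finset.sum_congr rfl fun y₂ _ => ?_
    rw [mul_div_mul_comm,
      Real.mul_rpow (div_nonneg (hA₁pos x y₁).le (hA₁pos x' y₁).le)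
        (div_nonneg (hA₂pos x y₁ y₂).le (hA₂pos x' y₁ y₂).le)]
    ring
  have hsumle : (∑ p : Y₁ × Y₂,
      (A₁ x' p.1 * A₂ x' p.1 p.2) *
        ((A₁ x p.1 * A₂ x p.1 p.2) / (A₁ x' p.1 * A₂ x' p.1 p.2)) ^ α)
      ≤ Real.exp ((α - 1) * ((ρ₁ + ρ₂) * α)) := by
    rw [hfact]
    have step1 : ∑ y₁, (A₁ x' y₁ * (A₁ x y₁ / A₁ x' y₁) ^ α) * S₂ y₁
        ≤ ∑ y₁, (A₁ x' y₁ * (A₁ x y₁ / A₁ x' y₁) ^ α) *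
            Real.exp ((α - 1) * (ρ₂ * α)) := by
      refine Finset.sum_le_sum fun y₁ _ => ?_
      exact mul_le_mul_of_nonneg_left (hS₂le y₁)
        (mul_nonneg (hA₁pos x' y₁).le
          (Real.rpow_pos_of_pos (div_pos (hA₁pos x y₁) (hA₁pos x' y₁)) α).le)
    have step2 : ∑ y₁, (A₁ x' y₁ * (A₁ x y₁ / A₁ x' y₁) ^ α) *
            Real.exp ((α - 1) * (ρ₂ * α))
        = S₁ * Real.exp ((α - 1) * (ρ₂ * α)) := by
      rw [hS₁def, Finset.sum_mul]
    calc _ ≤ S₁ * Real.exp ((α - 1) * (ρ₂ * α)) := by rw [← step2]; exact step1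
      _ ≤ Real.exp ((α - 1) * (ρ₁ * α)) * Real.exp ((α - 1) * (ρ₂ * α)) :=
        mul_le_mul_of_nonneg_right hS₁le (Real.exp_pos _).le
      _ = Real.exp ((α - 1) * ((ρ₁ + ρ₂) * α)) := by
        rw [← Real.exp_add]; ring_nf
  have hsumpos : (0:ℝ) < ∑ p : Y₁ × Y₂,
      (A₁ x' p.1 * A₂ x' p.1 p.2) *
        ((A₁ x p.1 * A₂ x p.1 p.2) / (A₁ x' p.1 * A₂ x' p.1 p.2)) ^ α := by
    apply Finset.sum_pos
    · intro p _
      exact mul_pos (mul_pos (hA₁pos x' p.1) (hA₂pos x' p.1 p.2))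
        (Real.rpow_pos_of_pos (div_pos (mul_pos (hA₁pos x p.1) (hA₂pos x p.1 p.2))
          (mul_pos (hA₁pos x' p.1) (hA₂pos x' p.1 p.2))) α)
    · exact Finset.univ_nonempty
  have hlog : Real.log (∑ p : Y₁ × Y₂,
      (A₁ x' p.1 * A₂ x' p.1 p.2) *
        ((A₁ x p.1 * A₂ x p.1 p.2) / (A₁ x' p.1 * A₂ x' p.1 p.2)) ^ α)
      ≤ (α - 1) * ((ρ₁ + ρ₂) * α) := by
    calc _ ≤ Real.log (Real.exp ((α - 1) * ((ρ₁ + ρ₂) * α))) :=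
          Real.log_le_log hsumpos hsumle
      _ = _ := Real.log_exp _
  rw [inv_mul_le_iff₀ hc]
  linarith [hlog]
end

section
/- Parallel composition of zCDP: let D be partitioned in a data-independent way into D_1 and D_2, where adjacent datasets D ≃ D' differ only in D_1 or only in D_2 (in exactly one part). If A_1 satisfies ρ_1-zCDP on its input and A_2(·, y) satisfies ρ_2-zCDP for each y, then A(D) = (Y_1, A_2(D_2, Y_1)) with Y_1 = A_1(D_1) satisfies max(ρ_1, ρ_2)-zCDP. -/
/-- Parallel composition of zCDP: the dataset is partitioned into two parts, adjacency
changes exactly one of the parts, `A₁` acts on the first part and `A₂` on the second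
(adaptively, given `Y₁`); the composition satisfies `max(ρ₁, ρ₂)`-zCDP. -/
theorem zcdp_parallel_composition {D₁ D₂ Y₁ Y₂ : Type*} [Fintype Y₁] [Fintype Y₂]
    (Adj₁ : D₁ → D₁ → Prop) (Adj₂ : D₂ → D₂ → Prop) (ρ₁ ρ₂ : ℝ)
    (A₁ : D₁ → Y₁ → ℝ) (A₂ : D₂ → Y₁ → Y₂ → ℝ)
    (hA₁pos : ∀ x y, 0 < A₁ x y) (hA₁sum : ∀ x, ∑ y, A₁ x y = 1)
    (hA₂pos : ∀ x y₁ y₂, 0 < A₂ x y₁ y₂) (hA₂sum : ∀ x y₁, ∑ y₂, A₂ x y₁ y₂ = 1)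
    (h₁ : ∀ x x', Adj₁ x x' → ∀ α > (1 : ℝ),
      (α - 1)⁻¹ * Real.log (∑ y, A₁ x' y * (A₁ x y / A₁ x' y) ^ α) ≤ ρ₁ * α)
    (h₂ : ∀ y₁, ∀ x x', Adj₂ x x' → ∀ α > (1 : ℝ),
      (α - 1)⁻¹ * Real.log (∑ y₂, A₂ x' y₁ y₂ * (A₂ x y₁ y₂ / A₂ x' y₁ y₂) ^ α)
        ≤ ρ₂ * α) :
    ∀ x₁ x₂ x₁' x₂' : _,
      ((Adj₁ x₁ x₁' ∧ x₂ = x₂') ∨ (x₁ = x₁' ∧ Adj₂ x₂ x₂')) → ∀ α > (1 : ℝ),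
      (α - 1)⁻¹ * Real.log (∑ p : Y₁ × Y₂,
          (A₁ x₁' p.1 * A₂ x₂' p.1 p.2) *
            ((A₁ x₁ p.1 * A₂ x₂ p.1 p.2) / (A₁ x₁' p.1 * A₂ x₂' p.1 p.2)) ^ α)
        ≤ max ρ₁ ρ₂ * α := by
  intro x₁ x₂ x₁' x₂' hadj α hα
  have hα0 : (0:ℝ) < α := by linarith
  have hα1 : (0:ℝ) < α - 1 := by linarith
  have hY₁ : Nonempty Y₁ := by
    rcases isEmpty_or_nonempty Y₁ with h | h
    · exfalso; have := hA₁sum x₁; simp at this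
    · exact h
  have hY₂ : Nonempty Y₂ := by
    rcases isEmpty_or_nonempty Y₂ with h | h
    · exfalso; have := hA₂sum x₂ (Classical.arbitrary Y₁); simp at this
    · exact h
  rcases hadj with ⟨h1, rfl⟩ | ⟨rfl, h2⟩
  · -- adjacency in first part
    have key : ∑ p : Y₁ × Y₂,
        (A₁ x₁' p.1 * A₂ x₂ p.1 p.2) *
          ((A₁ x₁ p.1 * A₂ x₂ p.1 p.2) / (A₁ x₁' p.1 * A₂ x₂ p.1 p.2)) ^ α
        = ∑ y, A₁ x₁' y * (A₁ x₁ y / A₁ x₁' y) ^ α := by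
      rw [Fintype.sum_prod_type]
      refine Finset.sum_congr rfl fun y₁ _ => ?_
      have : ∀ y₂ : Y₂,
          (A₁ x₁' y₁ * A₂ x₂ y₁ y₂) *
            ((A₁ x₁ y₁ * A₂ x₂ y₁ y₂) / (A₁ x₁' y₁ * A₂ x₂ y₁ y₂)) ^ α
          = (A₁ x₁' y₁ * (A₁ x₁ y₁ / A₁ x₁' y₁) ^ α) * A₂ x₂ y₁ y₂ := by
        intro y₂
        have hne : A₂ x₂ y₁ y₂ ≠ 0 := (hA₂pos x₂ y₁ y₂).ne'
        rw [mul_div_mul_right _ _ hne]; ring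
      simp_rw [this]
      rw [← Finset.mul_sum, hA₂sum, mul_one]
    rw [key]
    exact le_trans (h₁ _ _ h1 α hα)
      (mul_le_mul_of_nonneg_right (le_max_left _ _) hα0.le)
  · -- adjacency in second part
    set E := Real.exp ((α - 1) * (ρ₂ * α)) with hE
    have hS : ∀ y₁ : Y₁,
        ∑ y₂, A₂ x₂' y₁ y₂ * (A₂ x₂ y₁ y₂ / A₂ x₂' y₁ y₂) ^ α ≤ E := by
      intro y₁
      have hpos : 0 < ∑ y₂, A₂ x₂' y₁ y₂ * (A₂ x₂ y₁ y₂ / A₂ x₂' y₁ y₂) ^ α :=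
        Finset.sum_pos (fun y₂ _ => by
          have := hA₂pos x₂' y₁ y₂; have := hA₂pos x₂ y₁ y₂; positivity)
          Finset.univ_nonempty
      have h := h₂ y₁ x₂ x₂' h2 α hα
      have hlog : Real.log (∑ y₂, A₂ x₂' y₁ y₂ * (A₂ x₂ y₁ y₂ / A₂ x₂' y₁ y₂) ^ α)
          ≤ (α - 1) * (ρ₂ * α) := by
        rwa [inv_mul_le_iff₀ hα1] at h
      exact (Real.log_le_iff_le_exp hpos).mp hlog
    have key : ∑ p : Y₁ × Y₂,
        (A₁ x₁ p.1 * A₂ x₂' p.1 p.2) *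
          ((A₁ x₁ p.1 * A₂ x₂ p.1 p.2) / (A₁ x₁ p.1 * A₂ x₂' p.1 p.2)) ^ α
        = ∑ y₁, A₁ x₁ y₁ *
            (∑ y₂, A₂ x₂' y₁ y₂ * (A₂ x₂ y₁ y₂ / A₂ x₂' y₁ y₂) ^ α) := by
      rw [Fintype.sum_prod_type]
      refine Finset.sum_congr rfl fun y₁ _ => ?_
      rw [Finset.mul_sum]
      refine Finset.sum_congr rfl fun y₂ _ => ?_
      have hne : A₁ x₁ y₁ ≠ 0 := (hA₁pos x₁ y₁).ne'
      rw [mul_div_mul_left _ _ hne]; ring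
    rw [key]
    have hT : (∑ y₁, A₁ x₁ y₁ *
        (∑ y₂, A₂ x₂' y₁ y₂ * (A₂ x₂ y₁ y₂ / A₂ x₂' y₁ y₂) ^ α)) ≤ E := by
      calc ∑ y₁, A₁ x₁ y₁ * (∑ y₂, A₂ x₂' y₁ y₂ * (A₂ x₂ y₁ y₂ / A₂ x₂' y₁ y₂) ^ α)
          ≤ ∑ y₁, A₁ x₁ y₁ * E :=
            Finset.sum_le_sum fun y₁ _ =>
              mul_le_mul_of_nonneg_left (hS y₁) (hA₁pos x₁ y₁).le
        _ = E := by rw [← Finset.sum_mul, hA₁sum, one_mul]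
    have hTpos : 0 < ∑ y₁, A₁ x₁ y₁ *
        (∑ y₂, A₂ x₂' y₁ y₂ * (A₂ x₂ y₁ y₂ / A₂ x₂' y₁ y₂) ^ α) :=
      Finset.sum_pos (fun y₁ _ => mul_pos (hA₁pos x₁ y₁)
        (Finset.sum_pos (fun y₂ _ => by
          have := hA₂pos x₂' y₁ y₂; have := hA₂pos x₂ y₁ y₂; positivity)
          Finset.univ_nonempty)) Finset.univ_nonempty
    have hlogT := (Real.log_le_iff_le_exp hTpos).mpr hT
    calc (α - 1)⁻¹ * Real.log (∑ y₁, A₁ x₁ y₁ *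
          (∑ y₂, A₂ x₂' y₁ y₂ * (A₂ x₂ y₁ y₂ / A₂ x₂' y₁ y₂) ^ α))
        ≤ (α - 1)⁻¹ * ((α - 1) * (ρ₂ * α)) :=
          mul_le_mul_of_nonneg_left hlogT (inv_nonneg.mpr hα1.le)
      _ = ρ₂ * α := by field_simp
      _ ≤ max ρ₁ ρ₂ * α :=
          mul_le_mul_of_nonneg_right (le_max_right _ _) hα0.le
end

section
/- zCDP-to-(ε,δ)-DP conversion bound: if a mechanism satisfies ρ-zCDP, then for any δ ∈ (0,1) it satisfies (ε, δ)-DP with ε = ρ + 2·sqrt(ρ·log(1/δ)). -/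
/-!
Hölder's inequality coarse-grains the Rényi moment `M_α = ∑ q (p/q)^α` to an event `E`:
`p(E)^α ≤ q(E)^(α-1) M_α`. If `M_α ≤ δ e^{(α-1)ε}`, then either `p(E) ≤ δ`, or `p(E) > δ` and the
inequality forces `p(E) < e^ε q(E)`. The zCDP bound gives this with `ε = ρα + log(1/δ)/(α-1)`, whose
infimum over `α > 1` is `ρ + 2√(ρ log(1/δ))`; it is approached (for `ρ = 0` not attained) as
`α - 1 = √(log(1/δ)) / (√ρ + t)` with `t → 0⁺`.
-/

open Finset Filter Real Topology

theorem rpow_sum_le_rpow_sum_mul_sum_mul_div_rpow {ι : Type*} (s : Finset ι) {p q : ι → ℝ}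
    {α : ℝ} (hα : 1 ≤ α) (hp : ∀ i, 0 ≤ p i) (hq : ∀ i, 0 < q i) :
    (∑ i ∈ s, p i) ^ α ≤ (∑ i ∈ s, q i) ^ (α - 1) * ∑ i ∈ s, q i * (p i / q i) ^ α := by
  have hα0 : 0 < α := by linarith
  have hholder := inner_le_weight_mul_Lp_of_nonneg s hα q (fun i => p i / q i)
    (fun i => (hq i).le) (fun i => div_nonneg (hp i) (hq i).le)
  have hsum : ∑ i ∈ s, q i * (p i / q i) = ∑ i ∈ s, p i :=
    sum_congr rfl fun i _ => mul_div_cancel₀ (p i) (hq i).ne'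
  rw [hsum] at hholder
  have hA : 0 ≤ ∑ i ∈ s, q i := sum_nonneg fun i _ => (hq i).le
  have hM : 0 ≤ ∑ i ∈ s, q i * (p i / q i) ^ α :=
    sum_nonneg fun i _ => mul_nonneg (hq i).le (rpow_nonneg (div_nonneg (hp i) (hq i).le) α)
  calc (∑ i ∈ s, p i) ^ α
      ≤ ((∑ i ∈ s, q i) ^ (1 - α⁻¹) * (∑ i ∈ s, q i * (p i / q i) ^ α) ^ α⁻¹) ^ α :=
        rpow_le_rpow (sum_nonneg fun i _ => hp i) hholder hα0.le
    _ = (∑ i ∈ s, q i) ^ (α - 1) * ∑ i ∈ s, q i * (p i / q i) ^ α := by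
        rw [mul_rpow (rpow_nonneg hA _) (rpow_nonneg hM _), ← rpow_mul hA, ← rpow_mul hM,
          sub_mul, one_mul, inv_mul_cancel₀ hα0.ne', rpow_one]

theorem sum_le_exp_mul_sum_add_of_sum_mul_div_rpow_le {X : Type*} [Fintype X] {p q : X → ℝ}
    {α δ ε : ℝ} (hp : ∀ x, 0 ≤ p x) (hq : ∀ x, 0 < q x) (hα : 1 < α) (hδ : 0 < δ)
    (hM : ∑ x, q x * (p x / q x) ^ α ≤ δ * exp ((α - 1) * ε)) (E : Finset X) :
    ∑ x ∈ E, p x ≤ exp ε * ∑ x ∈ E, q x + δ := by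
  set P := ∑ x ∈ E, p x
  set A := ∑ x ∈ E, q x
  have hA : 0 ≤ A := sum_nonneg fun x _ => (hq x).le
  rcases le_or_gt P δ with hPδ | hδP
  · linarith [mul_nonneg (exp_pos ε).le hA]
  suffices P < exp ε * A by linarith
  have hP : 0 < P := hδ.trans hδP
  have hME : ∑ x ∈ E, q x * (p x / q x) ^ α ≤ ∑ x, q x * (p x / q x) ^ α :=
    sum_le_sum_of_subset_of_nonneg (subset_univ E) fun x _ _ =>
      mul_nonneg (hq x).le (rpow_nonneg (div_nonneg (hp x) (hq x).le) α)
  have hrpow_lt : P ^ (α - 1) * δ < (exp ε * A) ^ (α - 1) * δ :=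
    calc P ^ (α - 1) * δ < P ^ (α - 1) * P := mul_lt_mul_of_pos_left hδP (rpow_pos_of_pos hP _)
      _ = P ^ α := by rw [← rpow_add_one hP.ne', sub_add_cancel]
      _ ≤ A ^ (α - 1) * ∑ x ∈ E, q x * (p x / q x) ^ α :=
          rpow_sum_le_rpow_sum_mul_sum_mul_div_rpow E hα.le hp hq
      _ ≤ A ^ (α - 1) * (δ * exp ((α - 1) * ε)) :=
          mul_le_mul_of_nonneg_left (hME.trans hM) (rpow_nonneg hA _)
      _ = (exp ε * A) ^ (α - 1) * δ := by
          rw [mul_rpow (exp_pos ε).le hA, ← exp_mul, mul_comm ε]; ring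
  exact (rpow_lt_rpow_iff hP.le (mul_nonneg (exp_pos ε).le hA) (sub_pos.2 hα)).1
    (lt_of_mul_lt_mul_right hrpow_lt hδ.le)

theorem sum_le_exp_mul_sum_add_of_renyi_le {X : Type*} [Fintype X] {p q : X → ℝ} {α ρ δ : ℝ}
    (hp : ∀ x, 0 ≤ p x) (hq : ∀ x, 0 < q x) (hα : 1 < α) (hδ : 0 < δ)
    (hrenyi : (α - 1)⁻¹ * log (∑ x, q x * (p x / q x) ^ α) ≤ ρ * α) (E : Finset X) :
    ∑ x ∈ E, p x ≤ exp (ρ * α + log (1 / δ) / (α - 1)) * ∑ x ∈ E, q x + δ := by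
  refine sum_le_exp_mul_sum_add_of_sum_mul_div_rpow_le hp hq hα hδ ?_ E
  have hβ : 0 < α - 1 := sub_pos.2 hα
  have hlog : log (∑ x, q x * (p x / q x) ^ α) ≤ (α - 1) * (ρ * α) := by
    rwa [inv_mul_le_iff₀ hβ] at hrenyi
  calc ∑ x, q x * (p x / q x) ^ α ≤ exp (log (∑ x, q x * (p x / q x) ^ α)) := le_exp_log _
    _ ≤ exp ((α - 1) * (ρ * α)) := exp_le_exp.2 hlog
    _ = δ * exp ((α - 1) * (ρ * α + log (1 / δ) / (α - 1))) := by
        rw [mul_add, mul_div_cancel₀ _ hβ.ne', exp_add, one_div, log_inv, exp_neg, exp_log hδ]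
        field_simp

theorem exists_mul_add_div_sub_one_le {ρ L η : ℝ} (hL : 0 < L) (hη : 0 < η) :
    ∃ α > 1, ρ * α + L / (α - 1) ≤ ρ + 2 * √(ρ * L) + η := by
  have hsL : 0 < √L := sqrt_pos.2 hL
  set t := η / √L
  have hd : 0 < √ρ + t := add_pos_of_nonneg_of_pos (sqrt_nonneg ρ) (div_pos hη hsL)
  refine ⟨1 + √L / (√ρ + t), by linarith [div_pos hsL hd], ?_⟩
  have hρ : ρ ≤ √ρ * (√ρ + t) := by
    rcases le_total ρ 0 with h | h
    · rw [sqrt_eq_zero_of_nonpos h, zero_mul]; exact h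
    · nlinarith [mul_self_sqrt h, sqrt_nonneg ρ, div_pos hη hsL]
  have hdrift : ρ * (√L / (√ρ + t)) ≤ √ρ * √L := by
    rw [mul_div_assoc', div_le_iff₀ hd]
    nlinarith [mul_le_mul_of_nonneg_left hρ hsL.le]
  have hpenalty : L / (√L / (√ρ + t)) = √ρ * √L + η := by
    simp only [t]
    field_simp
    exact (sq_sqrt hL.le).symm
  rw [add_sub_cancel_left, hpenalty, sqrt_mul' ρ hL.le, mul_one_add]
  linarith

theorem le_exp_mul_add_of_forall_pos {P A δ ε : ℝ} (h : ∀ η > 0, P ≤ exp (ε + η) * A + δ) :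
    P ≤ exp ε * A + δ := by
  have hcont : Tendsto (fun η => exp (ε + η) * A + δ) (𝓝[>] 0) (𝓝 (exp ε * A + δ)) := by
    have : Continuous fun η => exp (ε + η) * A + δ := by fun_prop
    simpa using (this.tendsto 0).mono_left nhdsWithin_le_nhds
  exact ge_of_tendsto hcont (eventually_nhdsWithin_of_forall h)

theorem zcdp_to_approx_dp_general {X : Type*} [Fintype X] (p q : X → ℝ) (ρ δ : ℝ)
    (hppos : ∀ x, 0 < p x)
    (hqpos : ∀ x, 0 < q x)
    (hδ : δ ∈ Set.Ioo (0 : ℝ) 1)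
    (hzcdp : ∀ α > (1 : ℝ),
      (α - 1)⁻¹ * Real.log (∑ x, q x * (p x / q x) ^ α) ≤ ρ * α) :
    ∀ E : Finset X,
      ∑ x ∈ E, p x ≤
        Real.exp (ρ + 2 * Real.sqrt (ρ * Real.log (1 / δ))) * ∑ x ∈ E, q x + δ := by
  intro E
  obtain ⟨hδ0, hδ1⟩ := hδ
  have hL : 0 < log (1 / δ) := log_pos (one_lt_one_div hδ0 hδ1)
  have hA : 0 ≤ ∑ x ∈ E, q x := sum_nonneg fun x _ => (hqpos x).le
  refine le_exp_mul_add_of_forall_pos fun η hη => ?_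
  obtain ⟨α, hα, hε⟩ := exists_mul_add_div_sub_one_le (ρ := ρ) hL hη
  calc ∑ x ∈ E, p x ≤ exp (ρ * α + log (1 / δ) / (α - 1)) * ∑ x ∈ E, q x + δ :=
        sum_le_exp_mul_sum_add_of_renyi_le (fun x => (hppos x).le) hqpos hα hδ0 (hzcdp α hα) E
    _ ≤ exp (ρ + 2 * √(ρ * log (1 / δ)) + η) * ∑ x ∈ E, q x + δ := by gcongr

/-- zCDP-to-(ε,δ)-DP conversion: if the (discrete) output distributions `p, q` of a
mechanism on two adjacent datasets satisfy the zCDP Rényi bound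
`D_α(p‖q) ≤ ρα` for all `α > 1`, then for any `δ ∈ (0,1)` and every event `E`,
`p(E) ≤ e^ε q(E) + δ` with `ε = ρ + 2√(ρ log(1/δ))`. -/
theorem zcdp_to_approx_dp {X : Type*} [Fintype X] (p q : X → ℝ) (ρ δ : ℝ)
    (hppos : ∀ x, 0 < p x) (hpsum : ∑ x, p x = 1)
    (hqpos : ∀ x, 0 < q x) (hqsum : ∑ x, q x = 1)
    (hδ : δ ∈ Set.Ioo (0 : ℝ) 1)
    (hzcdp : ∀ α > (1 : ℝ),
      (α - 1)⁻¹ * Real.log (∑ x, q x * (p x / q x) ^ α) ≤ ρ * α) :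
    ∀ E : Finset X,
      ∑ x ∈ E, p x ≤
        Real.exp (ρ + 2 * Real.sqrt (ρ * Real.log (1 / δ))) * ∑ x ∈ E, q x + δ :=
  zcdp_to_approx_dp_general p q ρ δ hppos hqpos hδ hzcdp
end
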